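/- Let H be a hypergraph on a finite vertex set V with branching factor ρ ≥ 1, and let A ⊆ V. Then the hypergraph H|_{A=∅} := { e ∖ A : e ∈ H }, obtained by removing the vertices of A from all hyperedges of H, has branching factor 2^{|A|}·ρ. -/
import Mathlib


open Finset

/-- `H` has branching factor `ρ`: for every `B` and `r ≥ 0`, the number of
hyperedges `e ∈ H` with `e ⊇ B` and `|e| = |B| + r` is at most `ρ^r`. -/
def branching (V : Type) [DecidableEq V] (H : Finset (Finset V)) (ρ : ℝ) : Prop :=
  ∀ (B : Finset V) (r : ℕ),
    ((H.filter (fun e => B ⊆ e ∧ e.card = B.card + r)).card : ℝ) ≤ ρ ^ r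

/-- If `H` has branching factor `ρ ≥ 1`, then `H|_{A=∅} = {e ∖ A : e ∈ H}` has
branching factor `2^{|A|}·ρ`. -/
theorem stmt13 :
    ∀ (V : Type) [Fintype V] [DecidableEq V]
      (H : Finset (Finset V)) (ρ : ℝ), 1 ≤ ρ →
      branching V H ρ →
      ∀ A : Finset V, branching V (H.image (fun e => e \ A)) ((2:ℝ)^A.card * ρ) := by
  intro V _ _ H ρ hρ hH A B r
  rcases Nat.eq_zero_or_pos r with hr | hr
  · subst hr
    rw [pow_zero]
    have hsub : (H.image (fun e => e \ A)).filter
        (fun e => B ⊆ e ∧ e.card = B.card + 0) ⊆ {B} := by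
      intro e he
      simp only [mem_filter, mem_singleton] at he ⊢
      exact (Finset.eq_of_subset_of_card_le he.2.1 (by omega)).symm
    calc ((((H.image (fun e => e \ A)).filter
            (fun e => B ⊆ e ∧ e.card = B.card + 0)).card : ℕ) : ℝ)
        ≤ (({B} : Finset (Finset V)).card : ℝ) := by
          exact_mod_cast card_le_card hsub
      _ = 1 := by simp
  · -- reduce to counting e ∈ H
    have h1 : ((H.image (fun e => e \ A)).filter
        (fun e => B ⊆ e ∧ e.card = B.card + r)).card ≤
        (H.filter (fun e => B ⊆ e \ A ∧ (e \ A).card = B.card + r)).card := by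
      have : (H.image (fun e => e \ A)).filter
          (fun e => B ⊆ e ∧ e.card = B.card + r) ⊆
          (H.filter (fun e => B ⊆ e \ A ∧ (e \ A).card = B.card + r)).image
            (fun e => e \ A) := by
        intro f hf
        simp only [mem_filter, mem_image] at hf ⊢
        obtain ⟨⟨e, heH, hef⟩, hBf, hcard⟩ := hf
        exact ⟨e, ⟨heH, by rw [hef]; exact ⟨hBf, hcard⟩⟩, hef⟩
      exact le_trans (card_le_card this) card_image_le
    -- cover by intersections with A
    have h2 : H.filter (fun e => B ⊆ e \ A ∧ (e \ A).card = B.card + r) ⊆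
        A.powerset.biUnion (fun S =>
          H.filter (fun e => B ∪ S ⊆ e ∧ e.card = (B ∪ S).card + r)) := by
      intro e he
      simp only [mem_filter, mem_biUnion, mem_powerset] at he ⊢
      obtain ⟨heH, hBe, hcard⟩ := he
      refine ⟨e ∩ A, inter_subset_right, heH, ?_, ?_⟩
      · exact union_subset (hBe.trans sdiff_subset) inter_subset_left
      · have hdisj : Disjoint B (e ∩ A) := by
          have : Disjoint B A :=
            disjoint_left.mpr (fun x hx => (mem_sdiff.mp (hBe hx)).2)
          exact this.mono_right inter_subset_right
        rw [card_union_of_disjoint hdisj]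
        have := card_sdiff_add_card_inter e A
        omega
    have h3 : ((H.filter (fun e => B ⊆ e \ A ∧ (e \ A).card = B.card + r)).card : ℝ)
        ≤ (2:ℝ) ^ A.card * ρ ^ r := by
      calc ((H.filter (fun e => B ⊆ e \ A ∧ (e \ A).card = B.card + r)).card : ℝ)
          ≤ ((A.powerset.biUnion (fun S =>
              H.filter (fun e => B ∪ S ⊆ e ∧ e.card = (B ∪ S).card + r))).card : ℝ) := by
            exact_mod_cast card_le_card h2
        _ ≤ ((∑ S ∈ A.powerset, (H.filter
              (fun e => B ∪ S ⊆ e ∧ e.card = (B ∪ S).card + r)).card : ℕ) : ℝ) := by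
            exact_mod_cast card_biUnion_le
        _ = ∑ S ∈ A.powerset, ((H.filter
              (fun e => B ∪ S ⊆ e ∧ e.card = (B ∪ S).card + r)).card : ℝ) := by
            push_cast; ring
        _ ≤ ∑ S ∈ A.powerset, ρ ^ r := by
            exact Finset.sum_le_sum (fun S _ => hH (B ∪ S) r)
        _ = (2:ℝ) ^ A.card * ρ ^ r := by
            rw [Finset.sum_const, card_powerset]; push_cast; ring
    have hfin : (2:ℝ) ^ A.card * ρ ^ r ≤ ((2:ℝ) ^ A.card * ρ) ^ r := by
      rw [mul_pow]
      have h2a : (1:ℝ) ≤ (2:ℝ) ^ A.card := one_le_pow₀ (by norm_num)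
      have h2b : (2:ℝ) ^ A.card ≤ ((2:ℝ) ^ A.card) ^ r :=
        le_self_pow₀ h2a (by omega)
      exact mul_le_mul_of_nonneg_right h2b (pow_nonneg (by linarith) r)
    calc (((H.image (fun e => e \ A)).filter
          (fun e => B ⊆ e ∧ e.card = B.card + r)).card : ℝ)
        ≤ ((H.filter (fun e => B ⊆ e \ A ∧ (e \ A).card = B.card + r)).card : ℝ) := by
          exact_mod_cast h1
      _ ≤ (2:ℝ) ^ A.card * ρ ^ r := h3
      _ ≤ ((2:ℝ) ^ A.card * ρ) ^ r := hfin
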